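/- Let G = (V,E) be a finite undirected simple graph, i a vertex of positive degree d_i, N_i the set of neighbors of i, and t_i the number of triangles of G containing i. Then Σ_{j∈N_i} 2/(T_ij + 2) ≥ d_i² / (t_i + d_i), where T_ij is the number of common neighbors of i and j. -/
import Mathlib


open Finset

/-- The number of triangles of `G` containing the vertex `i`, i.e. the number of unordered
pairs `{j,k}` of neighbors of `i` with `(j,k) ∈ E`.  Each such unordered pair is counted twice
among ordered pairs, whence the division by `2`. -/
noncomputable def triangleCount {V : Type*} [Fintype V] [DecidableEq V]
    (G : SimpleGraph V) [DecidableRel G.Adj] (i : V) : ℝ :=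
  (((G.neighborFinset i ×ˢ G.neighborFinset i).filter fun p => G.Adj p.1 p.2).card : ℝ) / 2

lemma sum_common_neighbors {V : Type*} [Fintype V] [DecidableEq V]
    (G : SimpleGraph V) [DecidableRel G.Adj] (i : V) :
    ∑ j ∈ G.neighborFinset i, ((G.neighborFinset i ∩ G.neighborFinset j).card : ℝ)
      = (((G.neighborFinset i ×ˢ G.neighborFinset i).filter fun p => G.Adj p.1 p.2).card : ℝ) := by
  have h : ((G.neighborFinset i ×ˢ G.neighborFinset i).filter fun p => G.Adj p.1 p.2).card
      = ∑ j ∈ G.neighborFinset i, (G.neighborFinset i ∩ G.neighborFinset j).card := by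
    rw [Finset.card_filter, Finset.sum_product]
    refine Finset.sum_congr rfl fun j _ => ?_
    rw [← Finset.card_filter]
    congr 1
    ext k
    simp [SimpleGraph.mem_neighborFinset, and_comm]
  rw [h]
  push_cast
  rfl

/-- For a vertex `i` of positive degree `d_i`,
`Σ_{j ∈ N_i} 2/(T_ij + 2) ≥ d_i² / (t_i + d_i)`, where `T_ij` is the number of common
neighbors of `i` and `j` and `t_i` is the number of triangles containing `i`. -/
theorem sum_two_div_common_neighbors_ge
    {V : Type*} [Fintype V] [DecidableEq V]
    (G : SimpleGraph V) [DecidableRel G.Adj]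
    (i : V) (hdeg : 0 < G.degree i) :
    ∑ j ∈ G.neighborFinset i,
        2 / (((G.neighborFinset i ∩ G.neighborFinset j).card : ℝ) + 2)
      ≥ (G.degree i : ℝ) ^ 2 / (triangleCount G i + (G.degree i : ℝ)) := by
  set s := G.neighborFinset i with hs
  set T : V → ℝ := fun j => ((G.neighborFinset i ∩ G.neighborFinset j).card : ℝ) with hT
  have hTnn : ∀ j, (0:ℝ) ≤ T j := fun j => Nat.cast_nonneg _
  have hsum : ∑ j ∈ s, (T j + 2) / 2 = triangleCount G i + (G.degree i : ℝ) := by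
    simp only [add_div]
    rw [Finset.sum_add_distrib, ← Finset.sum_div, sum_common_neighbors]
    have : s.card = G.degree i := rfl
    simp [triangleCount, this, Finset.sum_const, add_div]
  have hpos : (0:ℝ) < triangleCount G i + (G.degree i : ℝ) := by
    have : (0:ℝ) ≤ triangleCount G i := by
      unfold triangleCount; positivity
    have hd : (0:ℝ) < (G.degree i : ℝ) := by exact_mod_cast hdeg
    linarith
  rw [ge_iff_le, div_le_iff₀ hpos]
  have hCS := Finset.sum_sq_le_sum_mul_sum_of_sq_eq_mul s
    (r := fun _ => (1:ℝ)) (f := fun j => (T j + 2) / 2) (g := fun j => 2 / (T j + 2))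
    (fun j _ => by have := hTnn j; positivity)
    (fun j _ => by have := hTnn j; positivity)
    (fun j _ => by
      have h2 : T j + 2 ≠ 0 := by have := hTnn j; positivity
      field_simp)
  simp only [Finset.sum_const, nsmul_eq_mul, mul_one] at hCS
  have hcard : (s.card : ℝ) = (G.degree i : ℝ) := rfl
  rw [hcard, hsum] at hCS
  linarith [hCS]
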